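/- Let α ∈ Sⁿ, let r_α be any element of G preserving ℝ^{n+1}×{0} with r_α(α,1) = e₁, let (p,q) ∈ ℤ^{n+1} × ℕ with p/q ∈ Sⁿ, let ε > 0, and let N ≥ q be such that ‖α − p/q‖ < ε/√(qN). Then there exists t > 0 such that ‖g_t r_α(p,q)‖ < ε√(n+1)·√(q/N), where (p,q) ∈ ℝ^{n+2} is the vector with first n+1 coordinates p and last coordinate q. -/

import Mathlib

open MeasureTheory

/-- The unit Euclidean sphere `Sⁿ` in `ℝ^{n+1}` (the ambient space `Fin (n+1) → ℝ`
carries the supremum norm). -/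
noncomputable def unitSphere (n : ℕ) : Set (Fin (n + 1) → ℝ) :=
  {x | ∑ i, x i ^ 2 = 1}

/-- The rational point `p/q` in `ℝ^{n+1}`. -/
noncomputable def ratPt (n : ℕ) (p : Fin (n + 1) → ℤ) (q : ℕ) : Fin (n + 1) → ℝ :=
  fun i => (p i : ℝ) / (q : ℝ)

/-- The quadratic form `Q(x) = x₁² + ⋯ + x_{n+1}² − x_{n+2}²` on `ℝ^{n+2}`. -/
noncomputable def Qform (n : ℕ) (x : Fin (n + 2) → ℝ) : ℝ :=
  (∑ i : Fin (n + 1), x i.castSucc ^ 2) - x (Fin.last (n + 1)) ^ 2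

/-- `Λ₀ = ℤ^{n+2} ∩ L`, the integer points of the light cone `L = {Q = 0}`. -/
noncomputable def Lambda0 (n : ℕ) : Set (Fin (n + 2) → ℝ) :=
  {v | (∀ i, ∃ m : ℤ, v i = (m : ℝ)) ∧ Qform n v = 0}

/-- Membership in `G = SO(Q)`: determinant one and preservation of `Q`. -/
def isSOQ (n : ℕ) (g : Matrix (Fin (n + 2)) (Fin (n + 2)) ℝ) : Prop :=
  g.det = 1 ∧ ∀ x, Qform n (g.mulVec x) = Qform n x

/-- The one-parameter diagonal flow `g_t`. -/
noncomputable def gFlow (n : ℕ) (t : ℝ) : Matrix (Fin (n + 2)) (Fin (n + 2)) ℝ :=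
  Matrix.of fun i j =>
    if i = 0 ∧ j = 0 then Real.cosh t
    else if i = 0 ∧ j = Fin.last (n + 1) then -Real.sinh t
    else if i = Fin.last (n + 1) ∧ j = 0 then -Real.sinh t
    else if i = Fin.last (n + 1) ∧ j = Fin.last (n + 1) then Real.cosh t
    else if i = j then 1 else 0

/-- The vector `e₁ = (1,0,…,0,1) ∈ L`. -/
noncomputable def eOne (n : ℕ) : Fin (n + 2) → ℝ :=
  fun i => if i = 0 then 1 else if i = Fin.last (n + 1) then 1 else 0

/-- The embedding `α ↦ (α,1)` of `Sⁿ` into the light cone. -/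
noncomputable def embedS (n : ℕ) (α : Fin (n + 1) → ℝ) : Fin (n + 2) → ℝ :=
  Fin.snoc α 1

/-- The vector `(p,q) ∈ ℝ^{n+2}` with first `n+1` coordinates `p` and last coordinate `q`. -/
noncomputable def vecPQ (n : ℕ) (p : Fin (n + 1) → ℤ) (q : ℕ) : Fin (n + 2) → ℝ :=
  Fin.snoc (fun i => (p i : ℝ)) (q : ℝ)

/-- `g` preserves the subspace `ℝ^{n+1} × {0}`. -/
def preservesHyperplane (n : ℕ) (g : Matrix (Fin (n + 2)) (Fin (n + 2)) ℝ) : Prop :=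
  ∀ x : Fin (n + 2) → ℝ, x (Fin.last (n + 1)) = 0 → g.mulVec x (Fin.last (n + 1)) = 0

/-- `ω(Λ)`: the infimum of the (sup) norms of the nonzero vectors of `Λ`. -/
noncomputable def omegaMin (n : ℕ) (Λ : Set (Fin (n + 2) → ℝ)) : ℝ :=
  sInf ((fun v => ‖v‖) '' {v | v ∈ Λ ∧ v ≠ 0})

/-- The lattice `g Λ₀`. -/
noncomputable def latticeOf (n : ℕ) (g : Matrix (Fin (n + 2)) (Fin (n + 2)) ℝ) :
    Set (Fin (n + 2) → ℝ) :=
  (fun v => g.mulVec v) '' Lambda0 n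

/-! Write `β = p/q`. Since `r_α (α,1) = e₁`, the vector `w = r_α (p,q) = q r_α (β,1)` equals
`q e₁ + q u` with `u = r_α (β - α, 0)`. The vector `u` lies in the hyperplane `x_{n+2} = 0`, on which
`Q` is the Euclidean square norm, so `Q(q u) = q² |β - α|² < (n+1) ε² q / N`. On the light-cone
coordinates `w₁ ± w_{n+2}` the flow `g_t` acts by `e^{∓t}`. Here `w₁ - w_{n+2} = q u₁` is small and,
as `Q(w) = 0`, the product of the two is minus the square norm of the middle coordinates of `w`, so a
suitable `t > 0` makes both small while leaving the middle coordinates unchanged. -/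

open Real Filter Topology

lemma Qform_smul (n : ℕ) (c : ℝ) (x : Fin (n + 2) → ℝ) : Qform n (c • x) = c ^ 2 * Qform n x := by
  simp only [Qform, Pi.smul_apply, smul_eq_mul, mul_pow, ← Finset.mul_sum]
  ring

lemma Qform_snoc_zero (n : ℕ) (v : Fin (n + 1) → ℝ) :
    Qform n (Fin.snoc v 0) = ∑ i, v i ^ 2 := by
  simp [Qform]

lemma Qform_embedS_of_mem_unitSphere {n : ℕ} {β : Fin (n + 1) → ℝ} (hβ : β ∈ unitSphere n) :
    Qform n (embedS n β) = 0 := by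
  simp only [Qform, embedS, Fin.snoc_castSucc, Fin.snoc_last]
  rw [hβ.out]; ring

lemma sq_le_Qform_of_last_eq_zero {n : ℕ} {x : Fin (n + 2) → ℝ} (hx : x (Fin.last (n + 1)) = 0)
    (k : Fin (n + 1)) : x k.castSucc ^ 2 ≤ Qform n x := by
  rw [Qform, hx, zero_pow two_ne_zero, sub_zero]
  exact Finset.single_le_sum (f := fun i : Fin (n + 1) => x i.castSucc ^ 2)
    (fun i _ => sq_nonneg _) (Finset.mem_univ k)

lemma Qform_sub_smul_eOne (n : ℕ) (w : Fin (n + 2) → ℝ) (c : ℝ) :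
    Qform n (w - c • eOne n) = Qform n w - 2 * c * (w 0 - w (Fin.last (n + 1))) := by
  simp only [Qform, Pi.sub_apply, Pi.smul_apply, eOne, Fin.castSucc_eq_zero_iff,
    Fin.castSucc_ne_last, ↓reduceIte, smul_eq_mul, mul_ite, mul_one, mul_zero, Fin.sum_univ_succ,
    Fin.castSucc_zero, Fin.castSucc_succ, Fin.succ_ne_zero, sub_zero, Fin.last_eq_zero_iff,
    Nat.add_eq_zero_iff, one_ne_zero, and_false]
  ring

lemma vecPQ_eq_smul_embedS (n : ℕ) (p : Fin (n + 1) → ℤ) {q : ℕ} (hq : q ≠ 0) :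
    vecPQ n p q = (q : ℝ) • embedS n (ratPt n p q) := by
  refine Fin.lastCases ?_ (fun i => ?_) |> funext
  · simp [vecPQ, embedS]
  · simp [vecPQ, embedS, ratPt, mul_div_cancel₀, hq]

lemma embedS_sub_embedS (n : ℕ) (β α : Fin (n + 1) → ℝ) :
    embedS n β - embedS n α = Fin.snoc (β - α) 0 := by
  refine Fin.lastCases ?_ (fun i => ?_) |> funext <;> simp [embedS]

lemma sum_sq_le_card_mul_norm_sq {ι : Type*} [Fintype ι] (v : ι → ℝ) :
    ∑ i, v i ^ 2 ≤ Fintype.card ι * ‖v‖ ^ 2 := by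
  rw [← nsmul_eq_mul]
  refine Finset.sum_le_card_nsmul _ _ _ fun i _ => ?_
  rw [← sq_abs, ← Real.norm_eq_abs]
  exact pow_le_pow_left₀ (norm_nonneg _) (norm_le_pi_norm v i) 2

lemma gFlow_mulVec_zero (n : ℕ) (t : ℝ) (w : Fin (n + 2) → ℝ) :
    (gFlow n t).mulVec w 0 = cosh t * w 0 - sinh t * w (Fin.last (n + 1)) := by
  have hl : Fin.last (n + 1) ≠ 0 := Fin.last_pos.ne'
  rw [Matrix.mulVec, dotProduct, Finset.sum_eq_add 0 (Fin.last (n + 1)) hl.symm]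
  · simp only [gFlow, Matrix.of_apply, and_self, ↓reduceIte, hl, and_false, neg_mul]
    ring
  · rintro j - ⟨h0, hl⟩
    simp [gFlow, h0, hl, Ne.symm h0]
  all_goals simp

lemma gFlow_mulVec_last (n : ℕ) (t : ℝ) (w : Fin (n + 2) → ℝ) :
    (gFlow n t).mulVec w (Fin.last (n + 1)) = cosh t * w (Fin.last (n + 1)) - sinh t * w 0 := by
  have hl : Fin.last (n + 1) ≠ 0 := Fin.last_pos.ne'
  rw [Matrix.mulVec, dotProduct, Finset.sum_eq_add 0 (Fin.last (n + 1)) hl.symm]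
  · simp only [gFlow, Matrix.of_apply, hl, and_true, ↓reduceIte, Fin.zero_eq_last_iff,
      Nat.add_eq_zero_iff, one_ne_zero, and_false, and_self, neg_mul]
    ring
  · rintro j - ⟨h0, hl⟩
    simp [gFlow, h0, hl, Ne.symm hl]
  all_goals simp

lemma gFlow_mulVec_of_ne (n : ℕ) (t : ℝ) (w : Fin (n + 2) → ℝ) {i : Fin (n + 2)} (h0 : i ≠ 0)
    (hl : i ≠ Fin.last (n + 1)) : (gFlow n t).mulVec w i = w i := by
  rw [Matrix.mulVec, dotProduct, Finset.sum_eq_single i]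
  · simp [gFlow, h0, hl]
  · rintro j - hj
    simp [gFlow, h0, hl, Ne.symm hj]
  · simp

lemma exists_pos_mul_exp_neg_add_mul_exp_lt {x y R : ℝ} (hy : 0 ≤ y) (hyR : y < R / 2)
    (hxy : x * y < R ^ 2 / 4) : ∃ t > 0, x * exp (-t) + y * exp t < R := by
  -- enlarging `y` to some `y' > 0` avoids a separate case `y = 0`; then `e^t = R / (2 y')`
  obtain ⟨y', ⟨hyy', hy'R, hxy'⟩⟩ : ∃ y' > y, y' < R / 2 ∧ x * y' < R ^ 2 / 4 := by
    have : ∀ᶠ s in 𝓝 y, s < R / 2 ∧ x * s < R ^ 2 / 4 :=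
      (eventually_lt_nhds hyR).and ((continuous_const.mul continuous_id).continuousAt.eventually
        (eventually_lt_nhds hxy))
    obtain ⟨s, hs, hys⟩ :=
      ((this.filter_mono nhdsWithin_le_nhds).and (self_mem_nhdsWithin (s := Set.Ioi y))).exists
    exact ⟨s, hys, hs⟩
  have hy' : 0 < y' := hy.trans_lt hyy'
  have hR : 0 < R := by linarith
  refine ⟨log (R / (2 * y')), log_pos ((one_lt_div (by positivity)).2 (by linarith)), ?_⟩
  rw [exp_neg, exp_log (by positivity)]
  have hy_term : y * (R / (2 * y')) < R / 2 := by
    calc y * (R / (2 * y')) < y' * (R / (2 * y')) := by gcongr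
      _ = R / 2 := by field_simp
  have hx_term : x * (R / (2 * y'))⁻¹ < R / 2 := by
    rw [inv_div, ← mul_div_assoc, div_lt_div_iff₀ hR two_pos]; nlinarith
  linarith

lemma exists_pos_norm_gFlow_mulVec_lt {n : ℕ} {w : Fin (n + 2) → ℝ} {R : ℝ} (hR : 0 < R)
    (hw : Qform n w = 0) (hwR : Qform n (w - w (Fin.last (n + 1)) • eOne n) < R ^ 2) :
    ∃ t > 0, ‖(gFlow n t).mulVec w‖ < R := by
  set x := w - w (Fin.last (n + 1)) • eOne n with hx
  have hl : Fin.last (n + 1) ≠ 0 := Fin.last_pos.ne'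
  have hx0 : x 0 = w 0 - w (Fin.last (n + 1)) := by simp [hx, eOne]
  have hxl : x (Fin.last (n + 1)) = 0 := by simp [hx, eOne, hl]
  have hx0_sq : (w 0 - w (Fin.last (n + 1))) ^ 2 ≤ Qform n x := by
    simpa [hx0] using sq_le_Qform_of_last_eq_zero hxl 0
  have hQx : Qform n x = -2 * w (Fin.last (n + 1)) * (w 0 - w (Fin.last (n + 1))) := by
    rw [hx, Qform_sub_smul_eOne, hw]; ring
  set a := (w 0 + w (Fin.last (n + 1))) / 2
  set b := (w 0 - w (Fin.last (n + 1))) / 2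
  have hb : |b| < R / 2 := by
    have := abs_lt_of_sq_lt_sq (hx0_sq.trans_lt hwR) hR.le
    simp only [b, abs_div, abs_two]
    linarith
  have hab : |a| * |b| < R ^ 2 / 4 := by
    have hab_eq : 4 * (a * b) = (w 0 - w (Fin.last (n + 1))) ^ 2 - Qform n x := by
      rw [hQx]; ring
    rw [← abs_mul, abs_lt]
    constructor <;> nlinarith [sq_nonneg (w 0 - w (Fin.last (n + 1)))]
  obtain ⟨t, ht, hlt⟩ := exists_pos_mul_exp_neg_add_mul_exp_lt (abs_nonneg b) hb hab
  refine ⟨t, ht, (pi_norm_lt_iff hR).2 fun i => ?_⟩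
  rw [Real.norm_eq_abs]
  by_cases hi0 : i = 0
  · subst hi0
    have : (gFlow n t).mulVec w 0 = a * exp (-t) + b * exp t := by
      rw [gFlow_mulVec_zero, cosh_eq, sinh_eq]; ring
    rw [this]
    calc _ ≤ |a| * exp (-t) + |b| * exp t := by
          simpa [abs_mul] using abs_add_le (a * exp (-t)) (b * exp t)
      _ < R := hlt
  by_cases hil : i = Fin.last (n + 1)
  · subst hil
    have : (gFlow n t).mulVec w (Fin.last (n + 1)) = a * exp (-t) - b * exp t := by
      rw [gFlow_mulVec_last, cosh_eq, sinh_eq]; ring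
    rw [this]
    calc _ ≤ |a| * exp (-t) + |b| * exp t := by
          simpa [abs_mul] using abs_sub (a * exp (-t)) (b * exp t)
      _ < R := hlt
  obtain ⟨k, rfl⟩ := Fin.exists_castSucc_eq.2 hil
  rw [gFlow_mulVec_of_ne n t w hi0 hil]
  have hxk : x k.castSucc = w k.castSucc := by simp [hx, eOne, hi0, hil]
  have := sq_le_Qform_of_last_eq_zero hxl k
  rw [hxk] at this
  exact abs_lt_of_sq_lt_sq (by linarith) hR.le

theorem small_vector_general (n : ℕ) (α : Fin (n + 1) → ℝ)
    (rα : Matrix (Fin (n + 2)) (Fin (n + 2)) ℝ) (hrG : isSOQ n rα)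
    (hrP : preservesHyperplane n rα) (hrα : rα.mulVec (embedS n α) = eOne n)
    (p : Fin (n + 1) → ℤ) (q : ℕ) (hq : 0 < q) (hpq : ratPt n p q ∈ unitSphere n)
    (ε : ℝ) (hε : 0 < ε) (N : ℝ) (hN : (q : ℝ) ≤ N)
    (happ : ‖α - ratPt n p q‖ < ε / Real.sqrt ((q : ℝ) * N)) :
    ∃ t : ℝ, 0 < t ∧
      ‖(gFlow n t * rα).mulVec (vecPQ n p q)‖ <
        ε * Real.sqrt ((n : ℝ) + 1) * Real.sqrt ((q : ℝ) / N) := by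
  set β := ratPt n p q
  set u := rα.mulVec (Fin.snoc (β - α) 0)
  have hq0 : (0 : ℝ) < q := Nat.cast_pos.2 hq
  have hN0 : 0 < N := hq0.trans_le hN
  have hw : rα.mulVec (vecPQ n p q) = (q : ℝ) • eOne n + (q : ℝ) • u := by
    rw [vecPQ_eq_smul_embedS n p hq.ne', Matrix.mulVec_smul, ← smul_add, ← hrα,
      ← Matrix.mulVec_add, ← embedS_sub_embedS, add_sub_cancel]
  have hu_last : u (Fin.last (n + 1)) = 0 := hrP _ (by simp)
  have hQu : Qform n u = ∑ i, (β - α) i ^ 2 := by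
    rw [hrG.2, Qform_snoc_zero]
  have hlast : rα.mulVec (vecPQ n p q) (Fin.last (n + 1)) = q := by
    simp [hw, hu_last, eOne]
  simp_rw [← Matrix.mulVec_mulVec]
  refine exists_pos_norm_gFlow_mulVec_lt (by positivity) ?_ ?_
  · rw [hrG.2, vecPQ_eq_smul_embedS n p hq.ne', Qform_smul, Qform_embedS_of_mem_unitSphere hpq,
      mul_zero]
  · rw [hlast, hw, add_sub_cancel_left, Qform_smul, hQu]
    calc (q : ℝ) ^ 2 * ∑ i, (β - α) i ^ 2 ≤ (q : ℝ) ^ 2 * ((n + 1) * ‖β - α‖ ^ 2) := by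
          gcongr
          simpa using sum_sq_le_card_mul_norm_sq (β - α)
      _ < (q : ℝ) ^ 2 * ((n + 1) * (ε / √(q * N)) ^ 2) := by
          rw [norm_sub_rev]; gcongr
      _ = (ε * √(n + 1) * √(q / N)) ^ 2 := by
          rw [div_pow, mul_pow, mul_pow, sq_sqrt (by positivity), sq_sqrt (by positivity),
            sq_sqrt (by positivity)]
          field_simp

/-- Lemma (small vector): if `N ≥ q` and `‖α − p/q‖ < ε/√(qN)`, then there exists `t > 0`
with `‖g_t r_α (p,q)‖ < ε √(n+1) √(q/N)`. -/
theorem small_vector (n : ℕ) (hn : 1 ≤ n) (α : Fin (n + 1) → ℝ) (hα : α ∈ unitSphere n)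
    (rα : Matrix (Fin (n + 2)) (Fin (n + 2)) ℝ) (hrG : isSOQ n rα)
    (hrP : preservesHyperplane n rα) (hrα : rα.mulVec (embedS n α) = eOne n)
    (p : Fin (n + 1) → ℤ) (q : ℕ) (hq : 0 < q) (hpq : ratPt n p q ∈ unitSphere n)
    (ε : ℝ) (hε : 0 < ε) (N : ℝ) (hN : (q : ℝ) ≤ N)
    (happ : ‖α - ratPt n p q‖ < ε / Real.sqrt ((q : ℝ) * N)) :
    ∃ t : ℝ, 0 < t ∧
      ‖(gFlow n t * rα).mulVec (vecPQ n p q)‖ <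
        ε * Real.sqrt ((n : ℝ) + 1) * Real.sqrt ((q : ℝ) / N) :=
  small_vector_general n α rα hrG hrP hrα p q hq hpq ε hε N hN happ
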